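/- arXiv:1411.1197 — 2 statements merged into one kernel-verified Lean document; each statement's English description precedes it below -/
import Mathlib

section
/- Let A be a commutative ring in which 2 is a unit, d : A → A a derivation, b a unit of A, and c, a₁, a₂ ∈ A. Set T = [[b, c], [0, b⁻¹]], M₁ = [[0, a₁], [1, 0]], M₂ = [[0, a₂], [1, 0]]. If T·M₁·T⁻¹ + T·d(T⁻¹) = M₂ (with d applied entrywise), then b² = 1, d(b) = 0, c = 0, and a₁ = a₂. If moreover A is an integral domain, then b = 1 or b = −1, so T is plus or minus the identity matrix. -/
/-- Let `A` be a commutative ring in which `2` is a unit, `d : A → A` a derivation,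
`b` a unit of `A`, and `c, a₁, a₂ ∈ A`.  Set `T = [[b, c], [0, b⁻¹]]`,
`M₁ = [[0, a₁], [1, 0]]`, `M₂ = [[0, a₂], [1, 0]]`.  If
`T·M₁·T⁻¹ + T·d(T⁻¹) = M₂` (with `d` applied entrywise), then `b² = 1`, `d b = 0`,
`c = 0`, and `a₁ = a₂`.  If moreover `A` is an integral domain, then `b = 1` or
`b = −1`, so `T` is plus or minus the identity matrix. -/
theorem gauge_rigidity_canonical_connection
    (A : Type*) [CommRing A] (h2 : IsUnit (2 : A)) (d : A → A)
    (hadd : ∀ x y : A, d (x + y) = d x + d y)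
    (hleib : ∀ x y : A, d (x * y) = x * d y + d x * y)
    (b : Aˣ) (c a₁ a₂ : A)
    (H : (!![(b : A), c; 0, ((b⁻¹ : Aˣ) : A)] * !![(0 : A), a₁; 1, 0] *
            !![((b⁻¹ : Aˣ) : A), -c; 0, (b : A)]) +
          (!![(b : A), c; 0, ((b⁻¹ : Aˣ) : A)] *
            (!![((b⁻¹ : Aˣ) : A), -c; 0, (b : A)]).map d) =
        !![(0 : A), a₂; 1, 0]) :
    (b : A) ^ 2 = 1 ∧ d (b : A) = 0 ∧ c = 0 ∧ a₁ = a₂ ∧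
      (IsDomain A → (b : A) = 1 ∨ (b : A) = -1) := by
  have hd0 : d 0 = 0 := by have := hadd 0 0; simpa using this.symm
  have hd1 : d 1 = 0 := by
    have h := hleib 1 1
    simp only [mul_one, one_mul] at h
    have h' : d 1 = d 1 + d 1 := by simpa using h
    linear_combination -h'
  have hbb : (b : A) * ((b⁻¹ : Aˣ) : A) = 1 := by exact_mod_cast b.mul_inv
  have h01 := congrFun (congrFun H 0) 1
  have h10 := congrFun (congrFun H 1) 0
  have h11 := congrFun (congrFun H 1) 1
  simp [Matrix.mul_apply, Matrix.add_apply, Matrix.map_apply, Fin.sum_univ_two,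
    Matrix.vecMul, dotProduct, hd0] at h01 h10 h11
  -- h10 : ↑b⁻¹ = ↑b
  have hb2 : (b : A) ^ 2 = 1 := by
    have := hbb; rw [h10] at this; rw [sq]; exact this
  -- d b = 0 from b^2 = 1 and 2 a unit
  have hdb : d (b : A) = 0 := by
    have h := hleib (b : A) (b : A)
    rw [← sq, hb2, hd1] at h
    have h2' : (2 : A) * ((b : A) * d (b : A)) = 0 := by
      rw [mul_comm (d (b:A)) (b:A)] at h; ring_nf; linear_combination -h
    have hb0 : (b : A) * d (b : A) = 0 := by
      obtain ⟨u, hu⟩ := h2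
      have := congrArg (fun x => ((u⁻¹ : Aˣ) : A) * x) h2'
      simp only [← mul_assoc, ← hu] at this
      simpa [Units.inv_mul] using this
    have := congrArg (fun x => ((b⁻¹ : Aˣ) : A) * x) hb0
    simp only [← mul_assoc] at this
    rw [mul_comm ((b⁻¹ : Aˣ) : A) (b : A), hbb] at this
    simpa using this
  -- c = d b = 0
  have hc : c = 0 := by
    -- h11 : -(↑b⁻¹ * c) + ↑b⁻¹ * d ↑b = 0
    rw [hdb, mul_zero] at h11
    have := congrArg (fun x => (b : A) * x) h11
    simp only [mul_add, mul_neg, ← mul_assoc, hbb] at this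
    simpa using this
  -- a₁ = a₂
  have ha : a₁ = a₂ := by
    rw [hc] at h01
    simp only [neg_zero, hd0, mul_zero, zero_mul, add_zero, mul_zero] at h01
    have : (b : A) * a₁ * (b : A) = (b : A) ^ 2 * a₁ := by ring
    rw [this, hb2, one_mul] at h01
    simpa using h01
  refine ⟨hb2, hdb, hc, ha, fun hdom => ?_⟩
  have hfac : ((b : A) - 1) * ((b : A) + 1) = 0 := by linear_combination hb2
  rcases mul_eq_zero.mp hfac with h | h
  · exact Or.inl (sub_eq_zero.mp h)
  · exact Or.inr (eq_neg_of_add_eq_zero_left h)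
end

section
/- Let p be a prime and A a commutative ring in which p·1 = 0. Let D : A → A be a derivation, n a natural number, and M an n×n matrix over A. Let D^{(n)} denote the additive endomorphism of Aⁿ obtained by applying D componentwise, and let ∇ := D^{(n)} + M, where M acts on Aⁿ by matrix–vector multiplication. Then the additive endomorphism ∇^p − (D^{(n)})^p of Aⁿ (p-fold composites) is A-linear: (∇^p − (D^{(n)})^p)(f·v) = f·(∇^p − (D^{(n)})^p)(v) for all f ∈ A and v ∈ Aⁿ; equivalently, ∇^p − (D^{(n)})^p is given by multiplication by an n×n matrix over A. -/
open Finset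

private theorem key_iter' {A : Type*} [CommRing A] {n : ℕ} (D : A → A)
    (L : (Fin n → A) →+ (Fin n → A))
    (hL : ∀ (f : A) (v : Fin n → A), L (f • v) = f • L v + D f • v)
    (k : ℕ) (f : A) (v : Fin n → A) :
    (⇑L)^[k] (f • v) =
      ∑ j ∈ range (k+1), k.choose j • (D^[j] f • (⇑L)^[k-j] v) := by
  induction k with
  | zero => simp [Finset.sum_range_one, ← Pi.one_def]
  | succ k ih =>
    rw [Function.iterate_succ_apply', ih, map_sum]
    have step : ∀ j ∈ range (k+1),
        L (k.choose j • (D^[j] f • (⇑L)^[k-j] v))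
          = k.choose j • (D^[j] f • (⇑L)^[k+1-j] v)
            + k.choose j • (D^[j+1] f • (⇑L)^[k-j] v) := by
      intro j hj
      have hj' : j ≤ k := Nat.lt_succ_iff.mp (mem_range.mp hj)
      have h1 : k + 1 - j = (k - j) + 1 := by omega
      rw [map_nsmul, hL, h1, Function.iterate_succ_apply' (⇑L) (k-j) v,
        Function.iterate_succ_apply' D j f, smul_add]
    rw [Finset.sum_congr rfl step, Finset.sum_add_distrib,
      Finset.sum_range_succ' (fun j => k.choose j • (D^[j] f • (⇑L)^[k+1-j] v)) k,
      Finset.sum_range_succ' (fun j => (k+1).choose j • (D^[j] f • (⇑L)^[k+1-j] v)) (k+1)]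
    simp only [Nat.choose_succ_succ, Nat.succ_sub_succ, Nat.choose_zero_right,
      one_nsmul, Function.iterate_zero_apply, add_nsmul]
    simp only [Nat.succ_eq_add_one]
    rw [Finset.sum_add_distrib]
    have hext : ∑ x ∈ range (k+1), k.choose (x+1) • (D^[x+1] f • (⇑L)^[k-x] v)
        = ∑ x ∈ range k, k.choose (x+1) • (D^[x+1] f • (⇑L)^[k-x] v) := by
      rw [Finset.sum_range_succ]
      simp [Nat.choose_succ_self]
    rw [← hext]
    abel

/-- p-iterate Leibniz-type rule in characteristic p. -/
private theorem key_p {p : ℕ} (hp : p.Prime) {A : Type*} [CommRing A]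
    (hchar : (p : A) = 0) {n : ℕ} (D : A → A)
    (L : (Fin n → A) →+ (Fin n → A))
    (hL : ∀ (f : A) (v : Fin n → A), L (f • v) = f • L v + D f • v)
    (f : A) (v : Fin n → A) :
    (⇑L)^[p] (f • v) = f • (⇑L)^[p] v + D^[p] f • v := by
  rw [key_iter' D L hL p f v, Finset.sum_range_succ]
  have h0 : ∑ j ∈ range p, p.choose j • (D^[j] f • (⇑L)^[p-j] v)
      = f • (⇑L)^[p] v := by
    rw [Finset.sum_eq_single_of_mem 0 (mem_range.mpr hp.pos)]
    · simp
    · intro j hj hj0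
      have hdvd : p ∣ p.choose j := hp.dvd_choose_self hj0 (mem_range.mp hj)
      obtain ⟨c, hc⟩ := hdvd
      have : (p.choose j : A) = 0 := by
        rw [hc, Nat.cast_mul, hchar, zero_mul]
      rw [← Nat.cast_smul_eq_nsmul A, this, zero_smul]
  rw [h0]
  simp

/-- Let `p` be a prime and `A` a commutative ring in which `p · 1 = 0`.  Let `D : A → A`
be a derivation, `n : ℕ`, and `M` an `n × n` matrix over `A`.  Let `D⁽ⁿ⁾` denote the
componentwise application of `D` to vectors in `Aⁿ`, and let `∇ := D⁽ⁿ⁾ + M` (with `M`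
acting by matrix–vector multiplication).  Then `∇^p − (D⁽ⁿ⁾)^p` (p-fold composites) is
`A`-linear: it commutes with scalar multiplication, and it is given by multiplication by
an `n × n` matrix over `A`. -/
theorem p_curvature_iterate_linear
    (p : ℕ) (hp : p.Prime) (A : Type*) [CommRing A] (hchar : (p : A) = 0)
    (D : A → A)
    (hadd : ∀ x y : A, D (x + y) = D x + D y)
    (hleib : ∀ x y : A, D (x * y) = x * D y + D x * y)
    (n : ℕ) (M : Matrix (Fin n) (Fin n) A) :
    (∀ (f : A) (v : Fin n → A),
      (fun w : Fin n → A => (fun i => D (w i)) + M.mulVec w)^[p] (f • v) -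
          (fun w : Fin n → A => fun i => D (w i))^[p] (f • v) =
        f • ((fun w : Fin n → A => (fun i => D (w i)) + M.mulVec w)^[p] v -
          (fun w : Fin n → A => fun i => D (w i))^[p] v)) ∧
    (∃ N : Matrix (Fin n) (Fin n) A, ∀ v : Fin n → A,
      (fun w : Fin n → A => (fun i => D (w i)) + M.mulVec w)^[p] v -
          (fun w : Fin n → A => fun i => D (w i))^[p] v = N.mulVec v) := by
  classical
  -- package the two operators as additive maps
  let Dn : (Fin n → A) →+ (Fin n → A) :=
    AddMonoidHom.mk' (fun w => fun i => D (w i))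
      (fun x y => by funext i; exact hadd (x i) (y i))
  let Nb : (Fin n → A) →+ (Fin n → A) :=
    AddMonoidHom.mk' (fun w => (fun i => D (w i)) + M.mulVec w)
      (fun x y => by
        funext i
        simp [Matrix.mulVec_add, hadd (x i) (y i)]
        ring)
  have hDn : ∀ (f : A) (v : Fin n → A), Dn (f • v) = f • Dn v + D f • v := by
    intro f v
    funext i
    simpa [Dn, mul_comm] using hleib f (v i)
  have hNb : ∀ (f : A) (v : Fin n → A), Nb (f • v) = f • Nb v + D f • v := by
    intro f v
    funext i
    have := hleib f (v i)
    simp [Nb, Matrix.mulVec_smul, this]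
    ring
  have hDfun : (fun w : Fin n → A => fun i => D (w i)) = ⇑Dn := rfl
  have hNfun : (fun w : Fin n → A => (fun i => D (w i)) + M.mulVec w) = ⇑Nb := rfl
  have hlin : ∀ (f : A) (v : Fin n → A),
      (⇑Nb)^[p] (f • v) - (⇑Dn)^[p] (f • v)
        = f • ((⇑Nb)^[p] v - (⇑Dn)^[p] v) := by
    intro f v
    rw [key_p hp hchar D Nb hNb f v, key_p hp hchar D Dn hDn f v, smul_sub]
    abel
  constructor
  · intro f v
    rw [hDfun, hNfun]
    exact hlin f v
  · -- build the linear map and its matrix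
    have hψadd : ∀ x y : Fin n → A,
        ((⇑Nb)^[p] (x + y) - (⇑Dn)^[p] (x + y))
          = ((⇑Nb)^[p] x - (⇑Dn)^[p] x) + ((⇑Nb)^[p] y - (⇑Dn)^[p] y) := by
      intro x y
      rw [iterate_map_add, iterate_map_add]
      abel
    let ψL : (Fin n → A) →ₗ[A] (Fin n → A) :=
      { toFun := fun v => (⇑Nb)^[p] v - (⇑Dn)^[p] v
        map_add' := hψadd
        map_smul' := fun f v => hlin f v }
    refine ⟨LinearMap.toMatrix' ψL, fun v => ?_⟩
    rw [hDfun, hNfun]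
    rw [← Matrix.toLin'_apply (LinearMap.toMatrix' ψL) v, Matrix.toLin'_toMatrix']
    rfl
end
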